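/- arXiv:1812.01422 — 5 statements merged into one kernel-verified Lean document; each statement's English description precedes it below -/
import Mathlib

section
/- Let A = diag(a₁, …, aₙ) be a diagonal n×n matrix and define the linear map 𝕀 on skew-symmetric matrices by 𝕀(u ∧ v) = (Au) ∧ (Av). For γ ∈ ℝⁿ with ⟨γ, γ⟩ = 1 and γₙ ≠ 0, define for 1 ≤ k ≤ n−1 the matrices X_k := γ ∧ (e_k − (γ_k/γₙ) eₙ). Then for 1 ≤ k, l ≤ n−1, (𝕀(X_k), X_l)_κ = ⟨Aγ, γ⟩ (a_l δ_{kl} + aₙ γ_k γ_l / γₙ²) − γ_k γ_l (aₙ − a_k)(aₙ − a_l), where (ξ, η)_κ = −(1/2) tr(ξη). -/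
open Matrix BigOperators

noncomputable section

/-- `u ∧ v := u vᵀ − v uᵀ`, a skew-symmetric matrix. -/
def wedgeVec {n : ℕ} (u v : Fin n → ℝ) : Matrix (Fin n) (Fin n) ℝ :=
  Matrix.of fun i j => u i * v j - v i * u j

/-- The Killing-type pairing `(ξ, η)_κ := −(1/2) tr(ξ η)`. -/
def killingPair {n : ℕ} (ξ η : Matrix (Fin n) (Fin n) ℝ) : ℝ :=
  -(1 / 2) * (ξ * η).trace

/-- Standard basis vector. -/
def stdVec {n : ℕ} (i : Fin n) : Fin n → ℝ := Pi.single i 1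

/-- The vector `e_k − (γ_k/γₙ) eₙ` for `1 ≤ k ≤ n−1` (here `k : Fin n` via `castSucc`,
and the last index plays the role of `n`). -/
def wVec {n : ℕ} (γ : Fin (n + 1) → ℝ) (k : Fin n) : Fin (n + 1) → ℝ :=
  stdVec (Fin.castSucc k) -
    (γ (Fin.castSucc k) / γ (Fin.last n)) • stdVec (Fin.last n)

/-- Trace formula for products of wedges. -/
lemma kp_aux {m : ℕ} (u v x y : Fin m → ℝ) :
    killingPair (wedgeVec u v) (wedgeVec x y) =
      (∑ i, u i * x i) * (∑ i, v i * y i) - (∑ i, u i * y i) * (∑ i, v i * x i) := by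
  simp only [killingPair, wedgeVec, Matrix.trace, Matrix.diag, Matrix.mul_apply,
    Matrix.of_apply]
  have h : ∀ i : Fin m, ∑ j, (u i * v j - v i * u j) * (x j * y i - y j * x i) =
      (u i * y i) * (∑ j, v j * x j) - (u i * x i) * (∑ j, v j * y j)
      - (v i * y i) * (∑ j, u j * x j) + (v i * x i) * (∑ j, u j * y j) := by
    intro i
    simp only [Finset.mul_sum, ← Finset.sum_sub_distrib, ← Finset.sum_add_distrib]
    exact Finset.sum_congr rfl fun j _ => by ring
  simp only [h, Finset.sum_add_distrib, Finset.sum_sub_distrib, ← Finset.sum_mul]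
  ring

/-- Since `X_k = γ ∧ (e_k − (γ_k/γₙ)eₙ)` and `𝕀(u ∧ v) = (Au) ∧ (Av)` (extended
bilinearly), we have `𝕀(X_k) = (Aγ) ∧ (A(e_k − (γ_k/γₙ)eₙ))`, and the stated
formula for `(𝕀(X_k), X_l)_κ` reads as follows. -/
theorem stmt2 {n : ℕ} (a γ : Fin (n + 1) → ℝ)
    (hγ : ∑ i, γ i ^ 2 = 1) (hγn : γ (Fin.last n) ≠ 0) (k l : Fin n) :
    killingPair
      (wedgeVec ((Matrix.diagonal a).mulVec γ) ((Matrix.diagonal a).mulVec (wVec γ k)))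
      (wedgeVec γ (wVec γ l)) =
      (∑ i, a i * γ i ^ 2) *
          (a (Fin.castSucc l) * (if k = l then (1 : ℝ) else 0)
            + a (Fin.last n) * γ (Fin.castSucc k) * γ (Fin.castSucc l) / γ (Fin.last n) ^ 2)
        - γ (Fin.castSucc k) * γ (Fin.castSucc l) *
            (a (Fin.last n) - a (Fin.castSucc k)) * (a (Fin.last n) - a (Fin.castSucc l)) := by
  rw [kp_aux]
  have hkn : Fin.castSucc k ≠ Fin.last n := (Fin.castSucc_lt_last k).ne
  have hln : Fin.castSucc l ≠ Fin.last n := (Fin.castSucc_lt_last l).ne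
  simp only [Matrix.mulVec_diagonal, wVec, stdVec, Pi.sub_apply, Pi.smul_apply,
    smul_eq_mul, Pi.single_apply]
  have hsum : (∑ x, a x * γ x ^ 2) = ∑ x, a x * γ x * γ x :=
    Finset.sum_congr rfl fun x _ => by ring
  by_cases hkl : k = l
  · subst hkl
    simp [Finset.mul_sum, mul_sub, sub_mul, Finset.sum_sub_distrib, mul_ite, ite_mul,
      Finset.sum_ite_eq', hkn, hln, hkn.symm, hln.symm, (Fin.castSucc_inj).ne]
    rw [hsum]
    field_simp
    ring
  · have hkl' : Fin.castSucc k ≠ Fin.castSucc l := fun h => hkl (Fin.castSucc_inj.mp h)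
    simp [Finset.mul_sum, mul_sub, sub_mul, Finset.sum_sub_distrib, mul_ite, ite_mul,
      Finset.sum_ite_eq', hkn, hln, hkn.symm, hln.symm, hkl, hkl', hkl'.symm]
    rw [hsum]
    field_simp
    ring
end
end

section
/- With notation as before (A = diag(a₁,…,aₙ), γ ∈ Sⁿ⁻¹ with γₙ ≠ 0, X_k = γ ∧ (e_k − (γ_k/γₙ) eₙ)), define B_{ij} := (e_i − (γ_i/γₙ) eₙ) ∧ (e_j − (γ_j/γₙ) eₙ) for 1 ≤ i, j ≤ n−1. Then for 1 ≤ i, j, l ≤ n−1: (𝕀(B_{ij}), X_l)_κ = (aₙ γ_i γ_j γ_l / γₙ²)(a_i − a_j) + a_j γ_i (a_i − aₙ) δ_{jl} − a_i γ_j (a_j − aₙ) δ_{il}, where 𝕀(u ∧ v) = (Au) ∧ (Av) extended bilinearly and (ξ, η)_κ = −(1/2) tr(ξη). -/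
open Matrix BigOperators

noncomputable section

lemma dot_single {n : ℕ} (p : Fin n) (g : Fin n → ℝ) :
    ∑ k, g k * (Pi.single p 1 : Fin n → ℝ) k = g p := by
  rw [Finset.sum_eq_single p]
  · simp
  · intro b _ hb; simp [Pi.single_apply, hb]
  · simp

lemma dotA {n : ℕ} (a γ : Fin (n + 1) → ℝ) (f : Fin (n + 1) → ℝ) (i : Fin n) :
    ∑ k, (Matrix.diagonal a).mulVec (wVec γ i) k * f k =
      a (Fin.castSucc i) * f (Fin.castSucc i) -
        γ (Fin.castSucc i) / γ (Fin.last n) * a (Fin.last n) * f (Fin.last n) := by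
  simp only [Matrix.mulVec_diagonal, wVec, stdVec, Pi.sub_apply, Pi.smul_apply, smul_eq_mul]
  have e : ∀ k, a k * ((Pi.single (Fin.castSucc i) 1 : Fin (n+1) → ℝ) k -
        γ (Fin.castSucc i) / γ (Fin.last n) * (Pi.single (Fin.last n) 1 : Fin (n+1) → ℝ) k) * f k
      = (a k * f k) * (Pi.single (Fin.castSucc i) 1 : Fin (n+1) → ℝ) k -
        (γ (Fin.castSucc i) / γ (Fin.last n) * a k * f k) * (Pi.single (Fin.last n) 1 : Fin (n+1) → ℝ) k := by
    intro k; ring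
  simp only [e, Finset.sum_sub_distrib, dot_single]

lemma wVec_castSucc {n : ℕ} (γ : Fin (n + 1) → ℝ) (l k : Fin n) :
    wVec γ l (Fin.castSucc k) = if k = l then 1 else 0 := by
  simp [wVec, stdVec, Pi.single_apply, Fin.castSucc_inj,
    (Fin.castSucc_lt_last k).ne]

lemma wVec_last {n : ℕ} (γ : Fin (n + 1) → ℝ) (l : Fin n) :
    wVec γ l (Fin.last n) = -(γ (Fin.castSucc l) / γ (Fin.last n)) := by
  simp [wVec, stdVec, Pi.single_apply, (Fin.castSucc_lt_last l).ne']
lemma killing_wedge {n : ℕ} (u v x y : Fin n → ℝ) :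
    killingPair (wedgeVec u v) (wedgeVec x y) =
      (∑ k, u k * x k) * (∑ k, v k * y k) - (∑ k, u k * y k) * (∑ k, v k * x k) := by
  simp only [killingPair, wedgeVec, Matrix.trace, Matrix.diag, Matrix.mul_apply,
    Matrix.of_apply]
  have e : ∀ p q : Fin n, (u p * v q - v p * u q) * (x q * y p - y q * x p)
      = (u p * y p)*(v q * x q) - (u p * x p)*(v q * y q) - (v p * y p)*(u q * x q)
        + (v p * x p)*(u q * y q) := by intros; ring
  simp only [e, Finset.sum_sub_distrib, Finset.sum_add_distrib, ← Finset.mul_sum,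
    ← Finset.sum_mul]
  ring


/-- `B_{ij} = (e_i − (γ_i/γₙ)eₙ) ∧ (e_j − (γ_j/γₙ)eₙ)`, so by bilinearity
`𝕀(B_{ij}) = (A(e_i − (γ_i/γₙ)eₙ)) ∧ (A(e_j − (γ_j/γₙ)eₙ))`; its pairing with
`X_l = γ ∧ (e_l − (γ_l/γₙ)eₙ)` is given by the stated formula. -/
theorem stmt3 {n : ℕ} (a γ : Fin (n + 1) → ℝ)
    (hγ : ∑ i, γ i ^ 2 = 1) (hγn : γ (Fin.last n) ≠ 0) (i j l : Fin n) :
    killingPair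
      (wedgeVec ((Matrix.diagonal a).mulVec (wVec γ i)) ((Matrix.diagonal a).mulVec (wVec γ j)))
      (wedgeVec γ (wVec γ l)) =
      a (Fin.last n) * γ (Fin.castSucc i) * γ (Fin.castSucc j) * γ (Fin.castSucc l)
          / γ (Fin.last n) ^ 2 * (a (Fin.castSucc i) - a (Fin.castSucc j))
        + a (Fin.castSucc j) * γ (Fin.castSucc i) * (a (Fin.castSucc i) - a (Fin.last n)) *
            (if j = l then (1 : ℝ) else 0)
        - a (Fin.castSucc i) * γ (Fin.castSucc j) * (a (Fin.castSucc j) - a (Fin.last n)) *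
            (if i = l then (1 : ℝ) else 0) := by
  rw [killing_wedge, dotA a γ γ i, dotA a γ γ j, dotA a γ (wVec γ l) i,
    dotA a γ (wVec γ l) j, wVec_castSucc, wVec_castSucc, wVec_last]
  rcases eq_or_ne i l with hil | hil <;> rcases eq_or_ne j l with hjl | hjl <;>
    simp [hil, hjl] <;> field_simp <;> ring
end
end

section
/- With A = diag(a₁,…,aₙ), γ ∈ Sⁿ⁻¹ with γₙ ≠ 0, let K_{kl} := ⟨Aγ,γ⟩(a_l δ_{kl} + aₙ γ_k γ_l/γₙ²) − γ_k γ_l (aₙ − a_k)(aₙ − a_l) and R_{ijl} := (aₙ γ_i γ_j γ_l/γₙ²)(a_i − a_j) + a_j γ_i (a_i − aₙ) δ_{jl} − a_i γ_j (a_j − aₙ) δ_{il}, for 1 ≤ i,j,k,l ≤ n−1. Define C_{ij}^k := (−γ_j(a_j − aₙ) δ_{ik} + γ_i(a_i − aₙ) δ_{jk}) / ⟨Aγ,γ⟩. If ⟨Aγ,γ⟩ ≠ 0, then for all 1 ≤ i, j, l ≤ n−1: ∑_{k=1}^{n−1} C_{ij}^k K_{kl} = R_{ijl}. -/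
open BigOperators

noncomputable section

/-- `⟨Aγ,γ⟩ = ∑ aᵢ γᵢ²` for `A = diag(a₁,…,aₙ)`. -/
def Apair {n : ℕ} (a γ : Fin (n + 1) → ℝ) : ℝ := ∑ i, a i * γ i ^ 2

/-- `K_{kl} = ⟨Aγ,γ⟩(a_l δ_{kl} + aₙ γ_k γ_l/γₙ²) − γ_k γ_l (aₙ − a_k)(aₙ − a_l)`. -/
def Kcoef {n : ℕ} (a γ : Fin (n + 1) → ℝ) (k l : Fin n) : ℝ :=
  Apair a γ * (a (Fin.castSucc l) * (if k = l then (1 : ℝ) else 0)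
      + a (Fin.last n) * γ (Fin.castSucc k) * γ (Fin.castSucc l) / γ (Fin.last n) ^ 2)
    - γ (Fin.castSucc k) * γ (Fin.castSucc l) *
        (a (Fin.last n) - a (Fin.castSucc k)) * (a (Fin.last n) - a (Fin.castSucc l))

/-- `R_{ijl} = (aₙ γᵢγⱼγ_l/γₙ²)(aᵢ − aⱼ) + aⱼγᵢ(aᵢ − aₙ)δ_{jl} − aᵢγⱼ(aⱼ − aₙ)δ_{il}`. -/
def Rcoef {n : ℕ} (a γ : Fin (n + 1) → ℝ) (i j l : Fin n) : ℝ :=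
  a (Fin.last n) * γ (Fin.castSucc i) * γ (Fin.castSucc j) * γ (Fin.castSucc l)
      / γ (Fin.last n) ^ 2 * (a (Fin.castSucc i) - a (Fin.castSucc j))
    + a (Fin.castSucc j) * γ (Fin.castSucc i) * (a (Fin.castSucc i) - a (Fin.last n)) *
        (if j = l then (1 : ℝ) else 0)
    - a (Fin.castSucc i) * γ (Fin.castSucc j) * (a (Fin.castSucc j) - a (Fin.last n)) *
        (if i = l then (1 : ℝ) else 0)

/-- The gyroscopic coefficients
`C_{ij}^k = (−γⱼ(aⱼ − aₙ)δ_{ik} + γᵢ(aᵢ − aₙ)δ_{jk}) / ⟨Aγ,γ⟩`. -/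
def Ccoef {n : ℕ} (a γ : Fin (n + 1) → ℝ) (i j k : Fin n) : ℝ :=
  (-(γ (Fin.castSucc j)) * (a (Fin.castSucc j) - a (Fin.last n)) *
        (if i = k then (1 : ℝ) else 0)
      + γ (Fin.castSucc i) * (a (Fin.castSucc i) - a (Fin.last n)) *
        (if j = k then (1 : ℝ) else 0)) / Apair a γ

theorem stmt4 {n : ℕ} (a γ : Fin (n + 1) → ℝ)
    (hγ : ∑ i, γ i ^ 2 = 1) (hγn : γ (Fin.last n) ≠ 0)
    (hA : Apair a γ ≠ 0) (i j l : Fin n) :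
    ∑ k : Fin n, Ccoef a γ i j k * Kcoef a γ k l = Rcoef a γ i j l := by
  have hsum : ∑ k : Fin n, Ccoef a γ i j k * Kcoef a γ k l
      = (-(γ (Fin.castSucc j)) * (a (Fin.castSucc j) - a (Fin.last n)) * Kcoef a γ i l
        + γ (Fin.castSucc i) * (a (Fin.castSucc i) - a (Fin.last n)) * Kcoef a γ j l)
        / Apair a γ := by
    simp only [Ccoef, div_mul_eq_mul_div, ← Finset.sum_div, add_mul, mul_assoc, ite_mul,
      one_mul, zero_mul, mul_ite, mul_zero, Finset.sum_add_distrib, Finset.sum_ite_eq,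
      Finset.mem_univ, if_true]
  rw [hsum]
  simp only [Kcoef, Rcoef]
  rcases eq_or_ne i l with hil | hil <;> rcases eq_or_ne j l with hjl | hjl <;>
    simp only [hil, hjl, if_pos rfl, if_neg, if_true, ite_true, not_false_eq_true] <;>
    field_simp <;> ring
end
end

section
/- Let φ ∈ C^∞(S), let λ_S be the Liouville 1-form on T*S, Ω_can = −dλ_S the canonical symplectic form, and let Ω_T be a 2-form on T*S with Ω_{nh} := Ω_can + Ω_T. If Ω_T = λ_S ∧ d(φ∘τ_S) (where τ_S : T*S → S is the projection), then d(exp(φ∘τ_S) Ω_{nh}) = 0. -/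
open BigOperators

noncomputable section

/-- The shape space `S = ℝᵐ`. -/
abbrev Vm (m : ℕ) := Fin m → ℝ

/-- The cotangent bundle `T*S = ℝᵐ × ℝᵐ` (base point, covector). -/
abbrev TVm (m : ℕ) := Vm m × Vm m

/-- Exterior derivative of a 1-form (coordinate formula, on constant vectors). -/
def d1 {E : Type*} [NormedAddCommGroup E] [NormedSpace ℝ E]
    (α : E → E → ℝ) : E → E → E → ℝ :=
  fun x u v => fderiv ℝ (fun y => α y v) x u - fderiv ℝ (fun y => α y u) x v

/-- Exterior derivative of a 2-form (coordinate formula, on constant vectors). -/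
def d2 {E : Type*} [NormedAddCommGroup E] [NormedSpace ℝ E]
    (Ω : E → E → E → ℝ) : E → E → E → E → ℝ :=
  fun x u v w => fderiv ℝ (fun y => Ω y v w) x u
    - fderiv ℝ (fun y => Ω y u w) x v + fderiv ℝ (fun y => Ω y u v) x w

/-- Wedge product of two 1-forms. -/
def wedge11 {E : Type*} (α β : E → E → ℝ) : E → E → E → ℝ :=
  fun x u v => α x u * β x v - α x v * β x u

/-- The Liouville 1-form `λ_S` on `T*S`: `λ_S(s,p)(U) = p(Tτ_S U)`. -/
def lamS (m : ℕ) : TVm m → TVm m → ℝ := fun x u => ∑ i, x.2 i * u.1 i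

/-- The canonical symplectic form `Ω_can = −dλ_S`. -/
def OmCan (m : ℕ) : TVm m → TVm m → TVm m → ℝ := fun x u v => -(d1 (lamS m) x u v)

section aux

variable {m : ℕ}

/-- derivative of `y ↦ ∑ i, y.2 i * a.1 i`. -/
lemma hasFDerivAt_lam (a : TVm m) (x : TVm m) :
    HasFDerivAt (fun y : TVm m => ∑ i, y.2 i * a.1 i)
      (∑ i, a.1 i • ((ContinuousLinearMap.proj i).comp
        (ContinuousLinearMap.snd ℝ (Vm m) (Vm m)))) x := by
  refine HasFDerivAt.fun_sum fun i _ => ?_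
  exact (((ContinuousLinearMap.proj i).comp
    (ContinuousLinearMap.snd ℝ (Vm m) (Vm m))).hasFDerivAt).mul_const (a.1 i)

lemma fderiv_lam (a : TVm m) (x p : TVm m) :
    fderiv ℝ (fun y : TVm m => ∑ i, y.2 i * a.1 i) x p = ∑ i, p.2 i * a.1 i := by
  rw [(hasFDerivAt_lam a x).fderiv]
  simp [mul_comm]

end aux

/-- If `Ω_T = λ_S ∧ d(φ∘τ_S)` then `d(exp(φ∘τ_S) Ω_{nh}) = 0`,
where `Ω_{nh} = Ω_can + Ω_T`. -/
theorem stmt7 (m : ℕ) (φ : Vm m → ℝ) (hφ : ContDiff ℝ (⊤ : ℕ∞) φ)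
    (ΩT : TVm m → TVm m → TVm m → ℝ)
    (hΩT : ∀ x u v, ΩT x u v =
      wedge11 (lamS m) (fun y w => fderiv ℝ (fun z : TVm m => φ z.1) y w) x u v) :
    ∀ x u v w,
      d2 (fun y p q => Real.exp (φ y.1) * (OmCan m y p q + ΩT y p q)) x u v w = 0 := by
  intro x u v w
  have hφd : Differentiable ℝ φ := hφ.differentiable (by simp)
  have hφ'd : Differentiable ℝ (fderiv ℝ φ) :=
    (hφ.fderiv_right (m := 1) (WithTop.coe_le_coe.mpr le_top)).differentiable one_ne_zero
  -- derivative of `y ↦ φ y.1`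
  have hcomp : ∀ z : TVm m, HasFDerivAt (fun y : TVm m => φ y.1)
      ((fderiv ℝ φ z.1).comp (ContinuousLinearMap.fst ℝ (Vm m) (Vm m))) z :=
    fun z => ((hφd z.1).hasFDerivAt).comp z (hasFDerivAt_fst)
  have hDphi : ∀ (z p : TVm m),
      fderiv ℝ (fun y : TVm m => φ y.1) z p = fderiv ℝ φ z.1 p.1 := by
    intro z p; rw [(hcomp z).fderiv]; rfl
  -- step 1 : closed form for the 2-form
  have hform : ∀ a b : TVm m,
      (fun y : TVm m => Real.exp (φ y.1) * (OmCan m y a b + ΩT y a b)) =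
      (fun y : TVm m => Real.exp (φ y.1) *
        ((∑ i, b.2 i * a.1 i) - (∑ i, a.2 i * b.1 i)
          + (∑ i, y.2 i * a.1 i) * fderiv ℝ φ y.1 b.1
          - (∑ i, y.2 i * b.1 i) * fderiv ℝ φ y.1 a.1)) := by
    intro a b
    funext y
    rw [hΩT]
    simp only [OmCan, d1, lamS, wedge11, fderiv_lam, hDphi]
    ring
  -- derivative building blocks at x
  have hexp : HasFDerivAt (fun y : TVm m => Real.exp (φ y.1))
      (Real.exp (φ x.1) • ((fderiv ℝ φ x.1).comp (ContinuousLinearMap.fst ℝ (Vm m) (Vm m)))) x :=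
    (hcomp x).exp
  have hD : ∀ b : TVm m, HasFDerivAt (fun y : TVm m => fderiv ℝ φ y.1 b.1)
      ((fderiv ℝ φ x.1).comp (0 : TVm m →L[ℝ] Vm m)
        + (((fderiv ℝ (fderiv ℝ φ) x.1).comp
            (ContinuousLinearMap.fst ℝ (Vm m) (Vm m))).flip b.1)) x := by
    intro b
    exact HasFDerivAt.clm_apply
      (((hφ'd x.1).hasFDerivAt).comp x (hasFDerivAt_fst)) (hasFDerivAt_const b.1 x)
  -- step 2 : the key derivative computation
  have key : ∀ a b p : TVm m,
      fderiv ℝ (fun y : TVm m => Real.exp (φ y.1) *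
        ((∑ i, b.2 i * a.1 i) - (∑ i, a.2 i * b.1 i)
          + (∑ i, y.2 i * a.1 i) * fderiv ℝ φ y.1 b.1
          - (∑ i, y.2 i * b.1 i) * fderiv ℝ φ y.1 a.1)) x p =
      Real.exp (φ x.1) *
        (fderiv ℝ φ x.1 p.1 *
          ((∑ i, b.2 i * a.1 i) - (∑ i, a.2 i * b.1 i)
            + (∑ i, x.2 i * a.1 i) * fderiv ℝ φ x.1 b.1
            - (∑ i, x.2 i * b.1 i) * fderiv ℝ φ x.1 a.1)
        + ((∑ i, p.2 i * a.1 i) * fderiv ℝ φ x.1 b.1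
            + (∑ i, x.2 i * a.1 i) * fderiv ℝ (fderiv ℝ φ) x.1 p.1 b.1
            - (∑ i, p.2 i * b.1 i) * fderiv ℝ φ x.1 a.1
            - (∑ i, x.2 i * b.1 i) * fderiv ℝ (fderiv ℝ φ) x.1 p.1 a.1)) := by
    intro a b p
    have h : HasFDerivAt (fun y : TVm m => Real.exp (φ y.1) *
        ((∑ i, b.2 i * a.1 i) - (∑ i, a.2 i * b.1 i)
          + (∑ i, y.2 i * a.1 i) * fderiv ℝ φ y.1 b.1
          - (∑ i, y.2 i * b.1 i) * fderiv ℝ φ y.1 a.1)) _ x :=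
      hexp.mul (((hasFDerivAt_const ((∑ i, b.2 i * a.1 i) - (∑ i, a.2 i * b.1 i)) x).add
        ((hasFDerivAt_lam a x).mul (hD b))).sub ((hasFDerivAt_lam b x).mul (hD a)))
    rw [h.fderiv]
    simp [ContinuousLinearMap.sum_apply, mul_comm, Finset.mul_sum]
    ring
  -- symmetry of the second derivative of φ
  have hsym : ∀ p q : Vm m,
      fderiv ℝ (fderiv ℝ φ) x.1 p q = fderiv ℝ (fderiv ℝ φ) x.1 q p := by
    intro p q
    exact second_derivative_symmetric (fun y => (hφd y).hasFDerivAt)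
      ((hφ'd x.1).hasFDerivAt) p q
  -- final computation
  simp only [d2]
  rw [hform v w, hform u w, hform u v, key v w u, key u w v, key u v w]
  have h1 := hsym v.1 u.1
  have h2 := hsym w.1 u.1
  have h3 := hsym w.1 v.1
  rw [h1, h2, h3]
  ring
end
end

section
/- Let S be a 2-dimensional manifold with local coordinates (s¹, s²), let T be a skew-symmetric (1,2)-tensor on S with T(∂/∂s¹, ∂/∂s²) = C¹ ∂/∂s¹ + C² ∂/∂s², and suppose φ ∈ C^∞(S) satisfies ∂φ/∂s¹ = −C² and ∂φ/∂s² = C¹. Then T(Y, Z) = Z[φ] Y − Y[φ] Z for all vector fields Y, Z on S, i.e., the system is φ-simple. -/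
open BigOperators

noncomputable section

/-- Let `S = ℝ²` with coordinates `(s¹, s²)`, let `T` be a skew-symmetric
pointwise-bilinear (1,2)-tensor on `S` with
`T(∂/∂s¹, ∂/∂s²) = C¹ ∂/∂s¹ + C² ∂/∂s²`, and suppose `φ ∈ C^∞(S)` satisfies
`∂φ/∂s¹ = −C²`, `∂φ/∂s² = C¹`.  Then `T(Y,Z) = Z[φ]Y − Y[φ]Z` for all vector
fields `Y, Z`, i.e. the system is `φ`-simple. -/
theorem stmt11 (C₁ C₂ : (Fin 2 → ℝ) → ℝ)
    (T : (Fin 2 → ℝ) → (Fin 2 → ℝ) → (Fin 2 → ℝ) → (Fin 2 → ℝ))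
    (hbil : ∀ x, ∃ B : (Fin 2 → ℝ) →ₗ[ℝ] (Fin 2 → ℝ) →ₗ[ℝ] (Fin 2 → ℝ),
      ∀ u v, T x u v = B u v)
    (hskew : ∀ x u v, T x v u = -T x u v)
    (hT : ∀ x, T x (Pi.single 0 1) (Pi.single 1 1) =
      C₁ x • (Pi.single 0 1 : Fin 2 → ℝ) + C₂ x • (Pi.single 1 1 : Fin 2 → ℝ))
    (φ : (Fin 2 → ℝ) → ℝ) (hφ : ContDiff ℝ (⊤ : ℕ∞) φ)
    (h1 : ∀ x, fderiv ℝ φ x (Pi.single 0 1) = -C₂ x)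
    (h2 : ∀ x, fderiv ℝ φ x (Pi.single 1 1) = C₁ x) :
    ∀ x u v, T x u v = fderiv ℝ φ x v • u - fderiv ℝ φ x u • v := by
  intro x u v
  obtain ⟨B, hB⟩ := hbil x
  set e0 : Fin 2 → ℝ := Pi.single 0 1 with he0
  set e1 : Fin 2 → ℝ := Pi.single 1 1 with he1
  obtain ⟨a, b, hu⟩ : ∃ a b, u = a • e0 + b • e1 :=
    ⟨u 0, u 1, by funext i; fin_cases i <;> simp [he0, he1]⟩
  obtain ⟨c, d, hv⟩ : ∃ c d, v = c • e0 + d • e1 :=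
    ⟨v 0, v 1, by funext i; fin_cases i <;> simp [he0, he1]⟩
  have h00 : B e0 e0 = 0 := by
    have h := hskew x e0 e0; rw [hB] at h
    have h2 : (2:ℝ) • B e0 e0 = 0 := by rw [two_smul]; nth_rewrite 1 [h]; abel
    simpa using h2
  have h11 : B e1 e1 = 0 := by
    have h := hskew x e1 e1; rw [hB] at h
    have h2 : (2:ℝ) • B e1 e1 = 0 := by rw [two_smul]; nth_rewrite 1 [h]; abel
    simpa using h2
  have h10 : B e1 e0 = - B e0 e1 := by
    rw [← hB, ← hB]; exact hskew x e0 e1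
  have h01 : B e0 e1 = C₁ x • e0 + C₂ x • e1 := by
    rw [← hB]; exact hT x
  rw [hB, hu, hv]
  simp only [map_add, map_smul, LinearMap.add_apply, LinearMap.smul_apply,
    h00, h11, h10, h01, smul_zero, zero_add, add_zero, smul_add, smul_smul,
    map_neg, smul_neg, h1, h2, smul_eq_mul]
  module
end
end
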